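/- arXiv:2412.08091 — 7 statements merged into one kernel-verified Lean document; each statement's English description precedes it below -/
import Mathlib

section
/- Let G = (V, E) be a finite simple graph and let {(a_v, b_v)}_{v ∈ V} be a valid representation of G. Then for every two distinct nodes w ≠ u of G, the nodes w and u are true twins if and only if b_w ⊕ a_w = b_u ⊕ a_u. -/
open scoped Classical

/-- `{(a_v, b_v)}_{v ∈ V}` is a valid representation of the graph `G`:
(1) no nonempty subset of the `a_v`'s sums to zero (linear independence over `𝔽₂`), and
(2) `b_v` is the sum of `a_u` over the neighbors `u` of `v`. -/
def ValidRep {V : Type*} [Fintype V] {ℓ : ℕ} (G : SimpleGraph V)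
    (a b : V → Fin ℓ → ZMod 2) : Prop :=
  (∀ U : Finset V, U.Nonempty → ∑ u ∈ U, a u ≠ 0) ∧
  ∀ v : V, b v = ∑ u ∈ Finset.univ.filter (fun u => G.Adj v u), a u

/-!
`b_v ⊕ a_v` is the sum of the `a_x` over the closed neighbourhood `N[v] = N(v) ∪ {v}`.
Over `𝔽₂` two subset sums differ by the sum over the symmetric difference of the subsets, so
independence of the `a_x` makes `S ↦ ∑_{x ∈ S} a_x` injective. Hence `b_w ⊕ a_w = b_u ⊕ a_u`
iff `N[w] = N[u]`, which for `w ≠ u` is exactly the definition of true twins.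
-/

namespace Finset

open scoped symmDiff

variable {ι M : Type*} [DecidableEq ι] [AddCommGroup M] [Module (ZMod 2) M]

theorem sum_symmDiff_eq_add (f : ι → M) (s t : Finset ι) :
    ∑ x ∈ s ∆ t, f x = ∑ x ∈ s, f x + ∑ x ∈ t, f x := by
  rw [symmDiff_def, sup_eq_union, sum_union disjoint_sdiff_sdiff, ← ZModModule.sub_eq_add,
    sum_sdiff_sub_sum_sdiff, ZModModule.sub_eq_add]

theorem sum_eq_sum_iff_of_forall_nonempty_sum_ne_zero {f : ι → M}
    (hf : ∀ U : Finset ι, U.Nonempty → ∑ x ∈ U, f x ≠ 0) {s t : Finset ι} :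
    ∑ x ∈ s, f x = ∑ x ∈ t, f x ↔ s = t := by
  refine ⟨fun h => ?_, fun h => h ▸ rfl⟩
  by_contra hst
  apply hf (s ∆ t) (symmDiff_nonempty.2 hst)
  rw [sum_symmDiff_eq_add, h, ZModModule.add_self]

end Finset

namespace SimpleGraph

variable {V : Type*} (G : SimpleGraph V)

theorem insert_neighborSet_eq_iff {w u : V} (hwu : w ≠ u) :
    insert w (G.neighborSet w) = insert u (G.neighborSet u) ↔
      G.Adj w u ∧ G.neighborSet w \ {u} = G.neighborSet u \ {w} := by
  simp only [Set.ext_iff, Set.mem_insert_iff, Set.mem_sdiff, mem_neighborSet,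
    Set.mem_singleton_iff]
  constructor
  · intro h
    have hadj : G.Adj w u := ((h u).2 (.inl rfl)).resolve_left hwu.symm
    refine ⟨hadj, fun x => ⟨fun ⟨hx, hxu⟩ => ?_, fun ⟨hx, hxw⟩ => ?_⟩⟩
    · exact ⟨((h x).1 (.inr hx)).resolve_left hxu, hx.ne'⟩
    · exact ⟨((h x).2 (.inr hx)).resolve_left hxw, hx.ne'⟩
  · rintro ⟨hadj, h⟩ x
    by_cases hxw : x = w
    · rw [hxw]; exact iff_of_true (.inl rfl) (.inr hadj.symm)
    by_cases hxu : x = u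
    · rw [hxu]; exact iff_of_true (.inr hadj) (.inl rfl)
    simpa [hxw, hxu] using h x

theorem coe_insert_filter_adj [Fintype V] [DecidableEq V] [DecidableRel G.Adj] (v : V) :
    (↑(insert v (Finset.univ.filter (G.Adj v))) : Set V) = insert v (G.neighborSet v) := by
  ext; simp

end SimpleGraph

theorem ValidRep.add_eq_sum_insert {V : Type*} [Fintype V] {ℓ : ℕ} {G : SimpleGraph V}
    {a b : V → Fin ℓ → ZMod 2} (hvalid : ValidRep G a b) (v : V) :
    b v + a v = ∑ x ∈ insert v (Finset.univ.filter (G.Adj v)), a x := by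
  rw [hvalid.2 v, Finset.sum_insert (by simp), add_comm]

/-- For a valid representation, distinct nodes `w`, `u` are true twins
(adjacent with `N(w) \ {u} = N(u) \ {w}`) iff `b_w ⊕ a_w = b_u ⊕ a_u`. -/
theorem trueTwins_iff_b_add_a_eq {V : Type*} [Fintype V] {ℓ : ℕ} (G : SimpleGraph V)
    (a b : V → Fin ℓ → ZMod 2) (hvalid : ValidRep G a b)
    (w u : V) (hwu : w ≠ u) :
    (G.Adj w u ∧ G.neighborSet w \ {u} = G.neighborSet u \ {w}) ↔
      b w + a w = b u + a u := by
  rw [hvalid.add_eq_sum_insert, hvalid.add_eq_sum_insert,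
    Finset.sum_eq_sum_iff_of_forall_nonempty_sum_ne_zero hvalid.1, ← Finset.coe_inj,
    G.coe_insert_filter_adj, G.coe_insert_filter_adj, G.insert_neighborSet_eq_iff hwu]
end

section
/- Let G = (V, E) be a finite simple graph, let {(a_v, b_v)}_{v ∈ V} be a valid representation of G, and let w ≠ u be nodes such that w is pendant and u is its only neighbor. Define, for all v ∈ V \ {w}: a'_v = a_v, and b'_v = b_v if v ≠ u and b'_u = b_u ⊕ a_w. Then {(a'_v, b'_v)}_{v ∈ V \ {w}} is a valid representation of the induced subgraph G − w. -/
open scoped Classical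

/-! Deleting `w` keeps the `a`-vectors independent, and removes `a_w` from the neighbour sum
of exactly the neighbours of `w`; for a pendant `w` that is `u` alone, and over `𝔽₂`
subtracting `a_w` is adding it. -/

open Finset

lemma Finset.sum_comp_ne_zero_of_injective {ι κ M : Type*} [AddCommMonoid M] {f : κ → M}
    (hf : ∀ U : Finset κ, U.Nonempty → ∑ x ∈ U, f x ≠ 0) {e : ι → κ} (he : e.Injective)
    (U : Finset ι) (hU : U.Nonempty) : ∑ x ∈ U, f (e x) ≠ 0 := by
  rw [← sum_image he.injOn]
  exact hf _ (hU.image e)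

namespace SimpleGraph

variable {V : Type*} (G : SimpleGraph V)

lemma adj_iff_eq_of_neighborSet_eq_singleton {v w u : V} (hw : G.neighborSet w = {u}) :
    G.Adj v w ↔ v = u := by
  rw [G.adj_comm, ← mem_neighborSet, hw, Set.mem_singleton_iff]

variable {M : Type*} [Fintype V]

lemma sum_filter_induce_adj [AddCommMonoid M] (f : V → M) (s : Set V) [Fintype s] (v : s) :
    ∑ x ∈ univ.filter (fun x => (G.induce s).Adj v x), f x
      = ∑ x ∈ univ.filter (fun x => G.Adj v x ∧ x ∈ s), f x := by
  refine (sum_map _ (Function.Embedding.subtype _) f).symm.trans ?_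
  congr 1
  ext x
  simp

lemma sum_filter_adj_and_ne [AddCommGroup M] (f : V → M) (v w : V) :
    ∑ x ∈ univ.filter (fun x => G.Adj v x ∧ x ≠ w), f x
      = ∑ x ∈ univ.filter (fun x => G.Adj v x), f x - if G.Adj v w then f w else 0 := by
  rw [filter_and, filter_ne', inter_erase, inter_univ]
  split_ifs with hvw
  · exact sum_erase_eq_sub (by simpa using hvw)
  · rw [erase_eq_of_notMem (by simpa using hvw), sub_zero]

end SimpleGraph

theorem validRep_update_pendant_general {V : Type*} [Fintype V] {ℓ : ℕ} (G : SimpleGraph V)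
    (a b : V → Fin ℓ → ZMod 2) (hvalid : ValidRep G a b)
    (w u : V) (hpend : G.neighborSet w = {u}) :
    ValidRep (G.induce {v : V | v ≠ w})
      (fun v => a v.1)
      (fun v => if v.1 = u then b v.1 + a w else b v.1) := by
  obtain ⟨hind, hb⟩ := hvalid
  refine ⟨Finset.sum_comp_ne_zero_of_injective hind Subtype.val_injective, fun v => ?_⟩
  refine Eq.trans ?_ (G.sum_filter_induce_adj a _ v).symm
  simp only [Set.mem_ofPred_eq]
  rw [G.sum_filter_adj_and_ne, ← hb, G.adj_iff_eq_of_neighborSet_eq_singleton hpend]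
  split_ifs
  · exact (ZModModule.sub_eq_add _ _).symm
  · exact (sub_zero _).symm

/-- If `w` is a pendant node with only neighbor `u`, then updating a valid representation by
keeping all `a_v`, keeping `b_v` for `v ≠ u`, and replacing `b_u` by `b_u ⊕ a_w`
yields a valid representation of the induced subgraph `G - w`. -/
theorem validRep_update_pendant {V : Type*} [Fintype V] {ℓ : ℕ} (G : SimpleGraph V)
    (a b : V → Fin ℓ → ZMod 2) (hvalid : ValidRep G a b)
    (w u : V) (hwu : w ≠ u) (hpend : G.neighborSet w = {u}) :
    ValidRep (G.induce {v : V | v ≠ w})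
      (fun v => a v.1)
      (fun v => if v.1 = u then b v.1 + a w else b v.1) :=
  validRep_update_pendant_general G a b hvalid w u hpend
end

section
/- Let G = (V, E) be a finite simple graph, let {(a_v, b_v)}_{v ∈ V} be a valid representation of G, and let w ≠ u be nodes that are false twins. Define, for all v ∈ V \ {w}: a'_v = a_v if v ≠ u and a'_u = a_u ⊕ a_w, and b'_v = b_v for all v. Then {(a'_v, b'_v)}_{v ∈ V \ {w}} is a valid representation of the induced subgraph G − w. -/
open scoped Classical

/-!
Adding `a_w` to `a_u` and forgetting `w` does not change any sum that matters: a sum of the new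
vectors over `U ⊆ V ∖ {w}` is the sum of the old ones over `U`, or over `U ∪ {w}` when `u ∈ U`.
So condition (1) is inherited. For a node `v ≠ w`, the new sum over `N(v) ∖ {w}` is the old one
over `N(v) ∖ {w}`, plus `a_w` exactly when `u ∈ N(v)`, which for twins happens exactly when
`w ∈ N(v)`; so it is the old sum over `N(v)`, that is `b_v`.
-/

namespace Finset

theorem sum_ite_add_eq_sum_insert {α M : Type*} [AddCommMonoid M] [DecidableEq α]
    (f : α → M) {s : Finset α} {u w : α} (hw : w ∉ s) :
    ∑ x ∈ s, (if x = u then f x + f w else f x) =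
      ∑ x ∈ (if u ∈ s then insert w s else s), f x := by
  split_ifs with hu
  · rw [sum_insert hw, ← add_sum_erase s _ hu, ← add_sum_erase s f hu, if_pos rfl,
      sum_congr rfl fun x hx => if_neg (ne_of_mem_erase hx), add_comm (f u), add_assoc]
  · exact sum_congr rfl fun x hx => if_neg (ne_of_mem_of_not_mem hx hu)

theorem ite_mem_erase_insert_erase {α : Type*} [DecidableEq α] {s : Finset α} {u w : α}
    (h : u ∈ s.erase w ↔ w ∈ s) :
    (if u ∈ s.erase w then insert w (s.erase w) else s.erase w) = s := by
  split_ifs with hu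
  · exact insert_erase (h.mp hu)
  · exact erase_eq_of_notMem (mt h.mpr hu)

end Finset

open Finset

namespace SimpleGraph

variable {V : Type*} (G : SimpleGraph V)

theorem map_subtype_filter_induce_adj_eq_erase [Fintype V] (w : V) (v : {x : V | x ≠ w})
    [DecidablePred ((G.induce {x | x ≠ w}).Adj v)] :
    (univ.filter fun x => (G.induce {x | x ≠ w}).Adj v x).map (Function.Embedding.subtype _) =
      (univ.filter (G.Adj v)).erase w := by
  ext x
  simp [and_comm]

theorem adj_iff_adj_of_neighborSet_eq {w u : V} (hN : G.neighborSet w = G.neighborSet u)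
    (v : V) : G.Adj v u ↔ G.Adj v w := by
  simpa [G.adj_comm v] using (Set.ext_iff.mp hN v).symm

end SimpleGraph

/-- If `w` and `u` are false twins (non-adjacent with equal neighborhoods), then updating a
valid representation by replacing `a_u` by `a_u ⊕ a_w` (keeping all other `a_v` and all `b_v`)
yields a valid representation of the induced subgraph `G - w`. -/
theorem validRep_update_falseTwins {V : Type*} [Fintype V] {ℓ : ℕ} (G : SimpleGraph V)
    (a b : V → Fin ℓ → ZMod 2) (hvalid : ValidRep G a b)
    (w u : V) (hwu : w ≠ u)
    (hft : ¬ G.Adj w u ∧ G.neighborSet w = G.neighborSet u) :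
    ValidRep (G.induce {v : V | v ≠ w})
      (fun v => if v.1 = u then a v.1 + a w else a v.1)
      (fun v => b v.1) := by
  obtain ⟨hindep, hnbr⟩ := hvalid
  have hsum : ∀ U : Finset {x : V | x ≠ w},
      ∑ x ∈ U, (if x.1 = u then a x.1 + a w else a x.1) =
        ∑ x ∈ (if u ∈ U.map (.subtype _) then insert w (U.map (.subtype _))
          else U.map (.subtype _)), a x := fun U =>
    (sum_map U (.subtype _) fun x => if x = u then a x + a w else a x).symm.trans
      (sum_ite_add_eq_sum_insert a (by simp))
  refine ⟨fun U hU => ?_, fun v => ?_⟩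
  · rw [hsum]
    exact hindep _ (by split_ifs <;> simp [hU.map])
  · rw [hsum, G.map_subtype_filter_induce_adj_eq_erase,
      ite_mem_erase_insert_erase (by simp [hwu.symm, G.adj_iff_adj_of_neighborSet_eq hft.2])]
    exact hnbr v
end

section
/- Let G = (V, E) be a finite simple graph, let {(a_v, b_v)}_{v ∈ V} be a valid representation of G, and let w ≠ u be nodes that are true twins. Define, for all v ∈ V \ {w}: a'_v = a_v if v ≠ u and a'_u = a_u ⊕ a_w, and b'_v = b_v if v ≠ u and b'_u = b_u ⊕ a_w. Then {(a'_v, b'_v)}_{v ∈ V \ {w}} is a valid representation of the induced subgraph G − w. -/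
open scoped Classical

/-
Removing `w` and XOR-ing `a_w` into `a_u` keeps the `a`-vectors independent, since a nonempty
sum of the new vectors is a nonempty sum of old ones (containing `a_w` exactly when it contains
`a_u`). For `v ≠ u` the twin condition says `v` sees `u` iff it sees `w`, so the lost summand
`a_w` of `b_v` is recovered through the new `a_u`; for `v = u` the lost summand is `a_w` itself,
which is exactly the correction `b_u + a_w` over `𝔽₂`.
-/

section

variable {V M : Type*}

theorem Finset.sum_ite_eq_add [AddCommMonoid M] (s : Finset V) (f : V → M)
    (u : V) (c : M) :
    ∑ y ∈ s, (if y = u then f y + c else f y) = ∑ y ∈ s, f y + if u ∈ s then c else 0 := by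
  rw [← Finset.sum_ite_eq' s u fun _ => c, ← Finset.sum_add_distrib]
  exact Finset.sum_congr rfl fun y _ => by split_ifs <;> simp

theorem SimpleGraph.adj_iff_adj_of_neighborSet_diff_eq {G : SimpleGraph V} {u w v : V}
    (h : G.neighborSet w \ {u} = G.neighborSet u \ {w}) (hvu : v ≠ u) (hvw : v ≠ w) :
    G.Adj v u ↔ G.Adj v w := by
  have hv := Set.ext_iff.mp h v
  simp only [Set.mem_sdiff, SimpleGraph.mem_neighborSet, Set.mem_singleton_iff, hvu, hvw,
    not_false_eq_true, and_true] at hv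
  rw [G.adj_comm v u, G.adj_comm v w, hv]

theorem SimpleGraph.map_filter_adj_induce_ne [Fintype V] (G : SimpleGraph V)
    (w : V) (v : {v : V | v ≠ w}) :
    (Finset.univ.filter ((G.induce {v : V | v ≠ w}).Adj v)).map (Function.Embedding.subtype _)
      = (Finset.univ.filter (G.Adj v)).erase w := by
  ext y
  simp only [Finset.mem_map, Finset.mem_filter, Finset.mem_univ, true_and, Finset.mem_erase,
    SimpleGraph.comap_adj, Function.Embedding.coe_subtype]
  constructor
  · rintro ⟨x, hx, rfl⟩
    exact ⟨x.2, hx⟩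
  · rintro ⟨hyw, hy⟩
    exact ⟨⟨y, hyw⟩, hy, rfl⟩

theorem sum_ite_add_ne_zero [AddCommMonoid M] {a : V → M}
    (ha : ∀ U : Finset V, U.Nonempty → ∑ y ∈ U, a y ≠ 0) {u w : V} {S : Finset V}
    (hS : S.Nonempty) (hwS : w ∉ S) :
    ∑ y ∈ S, (if y = u then a y + a w else a y) ≠ 0 := by
  rw [Finset.sum_ite_eq_add]
  split_ifs
  · rw [add_comm, ← Finset.sum_insert hwS]
    exact ha _ (Finset.insert_nonempty w S)
  · rw [add_zero]
    exact ha S hS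

theorem sum_erase_ite_add_eq_of_neighborSet_diff_eq [Fintype V] [AddCommGroup M]
    [Module (ZMod 2) M] {G : SimpleGraph V} {a : V → M} {u w v : V} {bv : M}
    (hbv : bv = ∑ y ∈ Finset.univ.filter (G.Adj v), a y) (hwu : G.Adj w u)
    (htwin : G.neighborSet w \ {u} = G.neighborSet u \ {w}) (hvw : v ≠ w) :
    ∑ y ∈ (Finset.univ.filter (G.Adj v)).erase w, (if y = u then a y + a w else a y)
      = if v = u then bv + a w else bv := by
  rw [Finset.sum_ite_eq_add, hbv]
  set N := Finset.univ.filter (G.Adj v)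
  have huN : u ∈ N.erase w ↔ G.Adj v u := by simp [N, hwu.ne.symm]
  by_cases hvu : v = u
  · subst hvu
    have hwN : w ∈ N := by simpa [N] using hwu.symm
    rw [if_neg (by simp [huN]), if_pos rfl, add_zero, ← Finset.sum_erase_add N a hwN, add_assoc,
      ZModModule.add_self, add_zero]
  · simp only [if_neg hvu, huN, G.adj_iff_adj_of_neighborSet_diff_eq htwin hvu hvw]
    by_cases hvw' : G.Adj v w
    · rw [if_pos hvw', Finset.sum_erase_add N a (by simpa [N] using hvw')]
    · rw [if_neg hvw', add_zero, Finset.erase_eq_of_notMem (by simpa [N] using hvw')]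

end

theorem validRep_update_trueTwins_general {V : Type*} [Fintype V] {ℓ : ℕ} (G : SimpleGraph V)
    (a b : V → Fin ℓ → ZMod 2) (hvalid : ValidRep G a b)
    (w u : V)
    (htt : G.Adj w u ∧ G.neighborSet w \ {u} = G.neighborSet u \ {w}) :
    ValidRep (G.induce {v : V | v ≠ w})
      (fun v => if v.1 = u then a v.1 + a w else a v.1)
      (fun v => if v.1 = u then b v.1 + a w else b v.1) := by
  obtain ⟨hind, hnbr⟩ := hvalid
  refine ⟨fun U hU => ?_, fun v => ?_⟩
  · have h := sum_ite_add_ne_zero (u := u) (w := w) hind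
      (hU.map (f := Function.Embedding.subtype _)) (by simp)
    rwa [Finset.sum_map] at h
  · have h := sum_erase_ite_add_eq_of_neighborSet_diff_eq (hnbr v) htt.1 htt.2 v.2
    rw [← G.map_filter_adj_induce_ne w v, Finset.sum_map] at h
    exact h.symm

/-- If `w` and `u` are true twins (adjacent with `N(w) \ {u} = N(u) \ {w}`), then updating a
valid representation by replacing `a_u` by `a_u ⊕ a_w` and `b_u` by `b_u ⊕ a_w`
(keeping all other `a_v`, `b_v`) yields a valid representation of the induced
subgraph `G - w`. -/
theorem validRep_update_trueTwins {V : Type*} [Fintype V] {ℓ : ℕ} (G : SimpleGraph V)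
    (a b : V → Fin ℓ → ZMod 2) (hvalid : ValidRep G a b)
    (w u : V) (hwu : w ≠ u)
    (htt : G.Adj w u ∧ G.neighborSet w \ {u} = G.neighborSet u \ {w}) :
    ValidRep (G.induce {v : V | v ≠ w})
      (fun v => if v.1 = u then a v.1 + a w else a v.1)
      (fun v => if v.1 = u then b v.1 + a w else b v.1) :=
  validRep_update_trueTwins_general G a b hvalid w u htt
end

section
/- Let G = (V, E) be a finite simple graph and let d ≥ 0. If a subset S ⊆ V contains two distinct nodes u ≠ v such that Δ(ν_u ⊕ e_u, ν_v ⊕ e_v) > 2d, then S is not a max-d-isolated clique. -/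
open scoped Classical

/-- `nu G v` is the characteristic vector (over `𝔽₂`) of the neighborhood of `v` in `G`. -/
noncomputable def nu {V : Type*} (G : SimpleGraph V) (v : V) : V → ZMod 2 :=
  fun u => if G.Adj v u then 1 else 0

/-- `evec v` is the characteristic vector (over `𝔽₂`) of the singleton `{v}`. -/
noncomputable def evec {V : Type*} (v : V) : V → ZMod 2 :=
  fun u => if u = v then 1 else 0

/-- `S` is a max-`d`-isolated clique: the subgraph induced by `S` is a clique and
every node of `S` has at most `d` neighbors outside `S`. -/
def IsMaxIsolatedClique {V : Type*} [Fintype V] (G : SimpleGraph V) (d : ℕ)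
    (S : Finset V) : Prop :=
  (∀ u ∈ S, ∀ v ∈ S, u ≠ v → G.Adj u v) ∧
  ∀ u ∈ S, (Finset.univ.filter (fun v => v ∉ S ∧ G.Adj u v)).card ≤ d

/-! `ν_u ⊕ e_u` is the indicator of the closed neighborhood of `u`. For two members of a clique `S`
these indicators agree on `S`, so they can only differ at neighbors of `u` or `v` outside `S`,
of which there are at most `2d` when `S` is max-`d`-isolated. -/

theorem nu_add_evec_apply {V : Type*} (G : SimpleGraph V) (u w : V) :
    (nu G u + evec u) w = if G.Adj u w ∨ w = u then 1 else 0 := by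
  by_cases h : w = u
  · subst h
    simp [nu, evec]
  · by_cases hadj : G.Adj u w <;> simp [nu, evec, h, hadj]

theorem adj_or_adj_of_nu_add_evec_apply_ne {V : Type*} {G : SimpleGraph V} {u v w : V}
    (hwu : w ≠ u) (hwv : w ≠ v) (hne : (nu G u + evec u) w ≠ (nu G v + evec v) w) :
    G.Adj u w ∨ G.Adj v w := by
  by_contra! h
  rw [nu_add_evec_apply, nu_add_evec_apply] at hne
  simp [hwu, hwv, h.1, h.2] at hne

namespace IsMaxIsolatedClique

variable {V : Type*} [Fintype V] {G : SimpleGraph V} {d : ℕ} {S : Finset V}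

theorem nu_add_evec_apply_of_mem (hS : IsMaxIsolatedClique G d S) {u w : V} (hu : u ∈ S)
    (hw : w ∈ S) : (nu G u + evec u) w = 1 := by
  rw [nu_add_evec_apply]
  by_cases h : w = u
  · simp [h]
  · simp [hS.1 u hu w hw (Ne.symm h)]

theorem hammingDist_nu_add_evec_le (hS : IsMaxIsolatedClique G d S) {u v : V} (hu : u ∈ S)
    (hv : v ∈ S) : hammingDist (nu G u + evec u) (nu G v + evec v) ≤ 2 * d := by
  set outside := fun x : V => Finset.univ.filter (fun w => w ∉ S ∧ G.Adj x w)
  have hsub : Finset.univ.filter (fun w => (nu G u + evec u) w ≠ (nu G v + evec v) w) ⊆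
      outside u ∪ outside v := by
    intro w hne
    rw [Finset.mem_filter] at hne
    have hwS : w ∉ S := fun hwS => hne.2 <| by
      rw [hS.nu_add_evec_apply_of_mem hu hwS, hS.nu_add_evec_apply_of_mem hv hwS]
    have hwu : w ≠ u := (ne_of_mem_of_not_mem hu hwS).symm
    have hwv : w ≠ v := (ne_of_mem_of_not_mem hv hwS).symm
    simpa [outside, hwS] using adj_or_adj_of_nu_add_evec_apply_ne hwu hwv hne.2
  calc hammingDist (nu G u + evec u) (nu G v + evec v)
      ≤ (outside u ∪ outside v).card := Finset.card_le_card hsub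
    _ ≤ (outside u).card + (outside v).card := Finset.card_union_le _ _
    _ ≤ 2 * d := by linarith [hS.2 u hu, hS.2 v hv]

end IsMaxIsolatedClique

theorem not_maxIsolatedClique_of_hammingDist_gt_general {V : Type*} [Fintype V]
    (G : SimpleGraph V) (d : ℕ) (S : Finset V)
    (u v : V) (hu : u ∈ S) (hv : v ∈ S)
    (hdist : hammingDist (nu G u + evec u) (nu G v + evec v) > 2 * d) :
    ¬ IsMaxIsolatedClique G d S := fun hS =>
  (hS.hammingDist_nu_add_evec_le hu hv).not_gt hdist

/-- If `S` contains two distinct nodes `u ≠ v` with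
`Δ(ν_u ⊕ e_u, ν_v ⊕ e_v) > 2d`, then `S` is not a max-`d`-isolated clique. -/
theorem not_maxIsolatedClique_of_hammingDist_gt {V : Type*} [Fintype V]
    (G : SimpleGraph V) (d : ℕ) (S : Finset V)
    (u v : V) (hu : u ∈ S) (hv : v ∈ S) (huv : u ≠ v)
    (hdist : hammingDist (nu G u + evec u) (nu G v + evec v) > 2 * d) :
    ¬ IsMaxIsolatedClique G d S :=
  not_maxIsolatedClique_of_hammingDist_gt_general G d S u v hu hv hdist
end

section
/- Let G = (V, E) be a finite simple graph. Then every connected component of G induces a clique if and only if for every node v ∈ V, the number of nodes u ∈ V satisfying ν_u ⊕ e_u = ν_v ⊕ e_v equals deg(v) + 1. -/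
/-!
`ν_v ⊕ e_v` is the indicator vector of the closed neighbourhood `N[v]`, so the count in question
is the number of closed twins of `v` (vertices `u` with `N[u] = N[v]`). Every closed twin of `v`
lies in `N[v]`, a set of size `deg v + 1`; hence the count equals `deg v + 1` exactly when all
neighbours of `v` are closed twins of `v`. Adjacent vertices being always closed twins makes
adjacency transitive on distinct vertices, which is the same as every connected component being
a clique.
-/

open scoped Classical

/-- `deg G v` is the degree of node `v` in `G`, i.e., the number of its neighbors. -/
noncomputable def deg {V : Type*} [Fintype V] (G : SimpleGraph V) (v : V) : ℕ :=
  (Finset.univ.filter (fun u => G.Adj v u)).card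

namespace SimpleGraph

variable {V : Type*} (G : SimpleGraph V)

def closedNeighborSet (v : V) : Set V := insert v (G.neighborSet v)

variable {G}

theorem mem_closedNeighborSet {v w : V} : w ∈ G.closedNeighborSet v ↔ w = v ∨ G.Adj v w :=
  Iff.rfl

theorem mem_closedNeighborSet_self (v : V) : v ∈ G.closedNeighborSet v :=
  Set.mem_insert v _

theorem eq_or_adj_of_closedNeighborSet_eq {u v : V}
    (h : G.closedNeighborSet u = G.closedNeighborSet v) : u = v ∨ G.Adj v u :=
  (h ▸ mem_closedNeighborSet_self u : u ∈ G.closedNeighborSet v)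

theorem closedNeighborSet_eq_of_adj_of_reachable_imp_adj
    (hG : ∀ u v : V, u ≠ v → G.Reachable u v → G.Adj u v) {u v : V} (huv : G.Adj u v) :
    G.closedNeighborSet u = G.closedNeighborSet v := by
  have subset_of_adj : ∀ {a b : V}, G.Adj a b →
      G.closedNeighborSet b ⊆ G.closedNeighborSet a := by
    rintro a b hab w (rfl | hbw)
    · exact Or.inr hab
    · by_cases hwa : w = a
      · exact Or.inl hwa
      · exact Or.inr (hG a w (Ne.symm hwa) (hab.reachable.trans hbw.reachable))
  exact (subset_of_adj huv.symm).antisymm (subset_of_adj huv)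

theorem reachable_imp_adj_of_closedNeighborSet_eq_of_adj
    (hG : ∀ u v : V, G.Adj u v → G.closedNeighborSet u = G.closedNeighborSet v)
    {u v : V} (hne : u ≠ v) (huv : G.Reachable u v) : G.Adj u v := by
  obtain ⟨p⟩ := huv
  induction p with
  | nil => exact absurd rfl hne
  | @cons a b c hab _ ih =>
    by_cases hbc : b = c
    · exact hbc ▸ hab
    · have hc : c ∈ G.closedNeighborSet b := Or.inr (ih hbc)
      rw [← hG a b hab] at hc
      exact hc.resolve_left hne.symm

theorem reachable_imp_adj_iff_closedNeighborSet_eq_of_adj :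
    (∀ u v : V, u ≠ v → G.Reachable u v → G.Adj u v) ↔
      ∀ u v : V, G.Adj u v → G.closedNeighborSet u = G.closedNeighborSet v :=
  ⟨fun hG _ _ => closedNeighborSet_eq_of_adj_of_reachable_imp_adj hG,
    fun hG _ _ => reachable_imp_adj_of_closedNeighborSet_eq_of_adj hG⟩

theorem card_closedTwins_eq_iff [Fintype V] (v : V) :
    (Finset.univ.filter (fun u => G.closedNeighborSet u = G.closedNeighborSet v)).card =
        (Finset.univ.filter (G.Adj v)).card + 1 ↔
      ∀ u, G.Adj v u → G.closedNeighborSet u = G.closedNeighborSet v := by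
  set twins := Finset.univ.filter (fun u => G.closedNeighborSet u = G.closedNeighborSet v)
  set closedNbhd := insert v (Finset.univ.filter (G.Adj v))
  have closedNbhd_card : closedNbhd.card = (Finset.univ.filter (G.Adj v)).card + 1 :=
    Finset.card_insert_of_notMem (by simp)
  have twins_subset : twins ⊆ closedNbhd := fun u hu => by
    simpa [closedNbhd] using eq_or_adj_of_closedNeighborSet_eq (Finset.mem_filter.mp hu).2
  rw [← closedNbhd_card]
  calc twins.card = closedNbhd.card ↔ twins = closedNbhd :=
        ⟨fun h => Finset.eq_of_subset_of_card_le twins_subset h.ge, congrArg _⟩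
    _ ↔ closedNbhd ⊆ twins := ⟨Eq.superset, twins_subset.antisymm⟩
    _ ↔ _ := by simp [closedNbhd, twins, Finset.subset_iff]

end SimpleGraph

theorem nu_add_evec_eq_indicator {V : Type*} (G : SimpleGraph V) (v : V) :
    nu G v + evec v = (G.closedNeighborSet v).indicator 1 := by
  ext w
  by_cases hwv : w = v
  · subst hwv
    simp [nu, evec, G.mem_closedNeighborSet_self]
  · simp [nu, evec, Set.indicator_apply, SimpleGraph.mem_closedNeighborSet, hwv]

theorem nu_add_evec_inj {V : Type*} (G : SimpleGraph V) {u v : V} :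
    nu G u + evec u = nu G v + evec v ↔ G.closedNeighborSet u = G.closedNeighborSet v := by
  simp only [nu_add_evec_eq_indicator]
  exact ⟨Set.indicator_one_inj _, fun h => h ▸ rfl⟩

/-- Every connected component of `G` induces a clique if and only if for every node `v`,
the number of nodes `u` with `ν_u ⊕ e_u = ν_v ⊕ e_v` equals `deg(v) + 1`. -/
theorem cliques_iff_closedNbhd_count {V : Type*} [Fintype V] (G : SimpleGraph V) :
    (∀ u v : V, u ≠ v → G.Reachable u v → G.Adj u v) ↔
      ∀ v : V,
        (Finset.univ.filter (fun u => nu G u + evec u = nu G v + evec v)).card =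
          deg G v + 1 := by
  simp only [nu_add_evec_inj, deg, G.card_closedTwins_eq_iff,
    G.reachable_imp_adj_iff_closedNeighborSet_eq_of_adj]
  exact ⟨fun h v u hvu => (h v u hvu).symm, fun h u v huv => (h u v huv).symm⟩
end

section
/- Let G = (V, E) be a finite simple graph and let d ≥ 0. A subset S ⊆ V is a max-d-isolated clique if and only if both of the following hold: (i) for every two distinct nodes u ≠ v in S, Δ(ν_u, ν_v) = Δ(ν_u ⊕ e_u, ν_v ⊕ e_v) + 2; and (ii) for every node u ∈ S, deg(u) ≤ |S| + d − 1. -/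
open scoped Classical

/-!
Flipping coordinate `u` of `ν_u` and coordinate `v` of `ν_v` changes nothing outside `{u, v}`.
On `{u, v}` the pair `(ν_u, ν_v)` differs in both coordinates if `u ~ v` and in neither otherwise,
while the flipped pair behaves the other way round. So condition (i) says exactly that `S` is a
clique, and for a clique `deg u = (|S| - 1) + |N(u) \ S|`, which turns (ii) into the isolation bound.
-/

open Finset

theorem hammingDist_add_card_filter_eq {ι β : Type*} [Fintype ι] [DecidableEq β]
    {f g f' g' : ι → β} (T : Finset ι) (hf : ∀ i ∉ T, f i = f' i) (hg : ∀ i ∉ T, g i = g' i) :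
    hammingDist f g + #{i ∈ T | f' i ≠ g' i} = hammingDist f' g' + #{i ∈ T | f i ≠ g i} := by
  simp only [hammingDist, card_filter, ← sum_add_sum_compl T]
  have hout : ∑ i ∈ Tᶜ, (if f i ≠ g i then 1 else 0) = ∑ i ∈ Tᶜ, (if f' i ≠ g' i then 1 else 0) :=
    sum_congr rfl fun i hi => by rw [hf i (mem_compl.mp hi), hg i (mem_compl.mp hi)]
  omega

theorem hammingDist_nu_eq_add_two_iff {V : Type*} [Fintype V] (G : SimpleGraph V) {u v : V}
    (huv : u ≠ v) :
    hammingDist (nu G u) (nu G v) = hammingDist (nu G u + evec u) (nu G v + evec v) + 2 ↔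
      G.Adj u v := by
  have key := hammingDist_add_card_filter_eq (f := nu G u) (g := nu G v)
    (f' := nu G u + evec u) (g' := nu G v + evec v) {u, v}
    (fun i hi => by simp_all [evec]) (fun i hi => by simp_all [evec])
  rw [card_filter, card_filter, sum_pair huv, sum_pair huv] at key
  by_cases h : G.Adj u v <;>
    simp [nu, evec, h, G.adj_comm v u, huv, huv.symm] at key ⊢ <;> omega

theorem deg_eq_card_sub_one_add {V : Type*} [Fintype V] {G : SimpleGraph V} {S : Finset V}
    (hS : G.IsClique (S : Set V)) {u : V} (hu : u ∈ S) :
    deg G u = #S - 1 + #{v | v ∉ S ∧ G.Adj u v} := by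
  rw [deg, ← card_filter_add_card_filter_not (· ∈ S), filter_filter, filter_filter,
    ← card_erase_of_mem hu]
  congr 2 <;> ext w
  · simp only [mem_filter, mem_univ, true_and, mem_erase]
    exact ⟨fun ⟨hadj, hw⟩ => ⟨(G.ne_of_adj hadj).symm, hw⟩,
      fun ⟨hne, hw⟩ => ⟨hS hu hw hne.symm, hw⟩⟩
  · simp only [mem_filter, mem_univ, true_and, and_comm]

theorem card_neighbors_outside_le_iff {V : Type*} [Fintype V] {G : SimpleGraph V} {S : Finset V}
    (hS : G.IsClique (S : Set V)) {u : V} (hu : u ∈ S) (d : ℕ) :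
    #{v | v ∉ S ∧ G.Adj u v} ≤ d ↔ (deg G u : ℤ) ≤ #S + d - 1 := by
  have hpos : 0 < #S := card_pos.mpr ⟨u, hu⟩
  rw [deg_eq_card_sub_one_add hS hu]
  omega

/-- `S` is a max-`d`-isolated clique iff (i) for all distinct `u, v ∈ S`,
`Δ(ν_u, ν_v) = Δ(ν_u ⊕ e_u, ν_v ⊕ e_v) + 2`, and (ii) for all `u ∈ S`,
`deg(u) ≤ |S| + d - 1`. -/
theorem maxIsolatedClique_iff {V : Type*} [Fintype V] (G : SimpleGraph V) (d : ℕ)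
    (S : Finset V) :
    IsMaxIsolatedClique G d S ↔
      ((∀ u ∈ S, ∀ v ∈ S, u ≠ v →
          hammingDist (nu G u) (nu G v) =
            hammingDist (nu G u + evec u) (nu G v + evec v) + 2) ∧
       ∀ u ∈ S, (deg G u : ℤ) ≤ (S.card : ℤ) + (d : ℤ) - 1) := by
  have hclique : (∀ u ∈ S, ∀ v ∈ S, u ≠ v →
      hammingDist (nu G u) (nu G v) = hammingDist (nu G u + evec u) (nu G v + evec v) + 2) ↔
      G.IsClique (S : Set V) :=
    forall₂_congr fun u _ => forall₂_congr fun v _ => forall_congr' fun huv =>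
      hammingDist_nu_eq_add_two_iff G huv
  rw [IsMaxIsolatedClique, hclique]
  exact and_congr_right fun hS => forall₂_congr fun u hu => card_neighbors_outside_le_iff hS hu d
end
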